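/- Let D ∈ ℝ^{n×p} with K := D Dᵀ symmetric positive definite satisfying K ⪰ λ² I for λ > 0, and let ρ ∈ (0,1]. Then for every vector v ∈ ℝ^n, vᵀ D ((1-ρ)DᵀD + ρI)⁻¹ Dᵀ v ≥ (λ²/((1-ρ)λ² + ρ)) ‖v‖². -/

import Mathlib

/-!
Pushing `D` through the inverse gives `D ((1-ρ)DᵀD + ρI)⁻¹ Dᵀ = N⁻¹K` with `N = (1-ρ)K + ρI`.
Write `B = K - λ²I ⪰ 0` and `d = (1-ρ)λ² + ρ > 0`, so that `N = (1-ρ)B + dI`. Then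
`N⁻¹K - (λ²/d)I = (ρ/d) N⁻¹B`, and `N⁻¹B = N⁻¹(BN)N⁻¹` is positive semidefinite because
`BN = (1-ρ)B² + dB` is.
-/

open Matrix

namespace Matrix

variable {m : Type*} [DecidableEq m]

theorem posDef_smul_add_smul_one {A : Matrix m m ℝ} (hA : A.PosSemidef) {a b : ℝ} (ha : 0 ≤ a)
    (hb : 0 < b) : (a • A + b • 1).PosDef :=
  PosDef.posSemidef_add (hA.smul ha) (PosDef.one.smul hb)

variable [Fintype m]

theorem mul_inv_mul_transpose_eq_inv_mul {k α : Type*} [Fintype k] [DecidableEq k] [CommRing α]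
    (D : Matrix m k α) (a b : α)
    (hM : IsUnit (a • (Dᵀ * D) + b • 1).det) (hN : IsUnit (a • (D * Dᵀ) + b • 1).det) :
    D * (a • (Dᵀ * D) + b • 1)⁻¹ * Dᵀ = (a • (D * Dᵀ) + b • 1)⁻¹ * (D * Dᵀ) := by
  set M := a • (Dᵀ * D) + b • (1 : Matrix k k α)
  set N := a • (D * Dᵀ) + b • (1 : Matrix m m α)
  have hDM : D * M = N * D := by
    simp only [M, N, Matrix.mul_add, Matrix.add_mul, Matrix.mul_smul, Matrix.smul_mul,
      Matrix.mul_one, Matrix.one_mul, Matrix.mul_assoc]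
  calc D * M⁻¹ * Dᵀ = N⁻¹ * (N * D) * M⁻¹ * Dᵀ := by rw [nonsing_inv_mul_cancel_left _ _ hN]
    _ = N⁻¹ * (D * Dᵀ) := by
      rw [← hDM, ← Matrix.mul_assoc, mul_nonsing_inv_cancel_right _ _ hM, Matrix.mul_assoc]

theorem PosSemidef.mul_smul_add_smul_one {B : Matrix m m ℝ} (hB : B.PosSemidef) {a b : ℝ}
    (ha : 0 ≤ a) (hb : 0 ≤ b) : (B * (a • B + b • 1)).PosSemidef := by
  have hBB : (B * B).PosSemidef := by
    simpa only [hB.isHermitian.eq] using posSemidef_conjTranspose_mul_self B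
  rw [Matrix.mul_add, Matrix.mul_smul, Matrix.mul_smul, Matrix.mul_one]
  exact (hBB.smul ha).add (hB.smul hb)

theorem posSemidef_inv_mul_of_posSemidef_mul {B N : Matrix m m ℝ} (hN : N.IsHermitian)
    (hNdet : IsUnit N.det) (hBN : (B * N).PosSemidef) : (N⁻¹ * B).PosSemidef := by
  have h := hBN.conjTranspose_mul_mul_same N⁻¹
  rwa [hN.inv.eq, Matrix.mul_assoc, Matrix.mul_assoc, mul_nonsing_inv _ hNdet, Matrix.mul_one]
    at h

theorem posSemidef_inv_mul_sub_smul_one {K : Matrix m m ℝ} {μ ρ : ℝ}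
    (hK : (K - μ • 1).PosSemidef) (hμ : 0 ≤ μ) (hρ0 : 0 < ρ) (hρ1 : ρ ≤ 1) :
    (((1 - ρ) • K + ρ • 1)⁻¹ * K - (μ / ((1 - ρ) * μ + ρ)) • 1).PosSemidef := by
  set B := K - μ • (1 : Matrix m m ℝ)
  set d := (1 - ρ) * μ + ρ
  have hd : 0 < d := by positivity
  have hN : (1 - ρ) • K + ρ • 1 = (1 - ρ) • B + d • 1 := by
    simp only [B, d, smul_sub, smul_smul, add_smul]; abel
  have hNpd : ((1 - ρ) • B + d • 1).PosDef :=
    posDef_smul_add_smul_one hK (by linarith) hd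
  have hNdet : IsUnit ((1 - ρ) • B + d • 1).det :=
    (isUnit_iff_isUnit_det _).mp hNpd.isUnit
  have hBN : (B * ((1 - ρ) • B + d • 1)).PosSemidef :=
    hK.mul_smul_add_smul_one (by linarith) hd.le
  have key : ((1 - ρ) • B + d • 1)⁻¹ * K - (μ / d) • 1
      = (ρ / d) • (((1 - ρ) • B + d • 1)⁻¹ * B) := by
    have hK' : K = B + μ • 1 := by simp only [B, sub_add_cancel]
    have hμd : μ / d * d = μ := div_mul_cancel₀ μ hd.ne'
    have hρd : ρ / d = 1 - μ / d * (1 - ρ) := by field_simp; ring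
    calc ((1 - ρ) • B + d • 1)⁻¹ * K - (μ / d) • 1
        = ((1 - ρ) • B + d • 1)⁻¹ * (K - (μ / d) • ((1 - ρ) • B + d • 1)) := by
          rw [Matrix.mul_sub, Matrix.mul_smul, nonsing_inv_mul _ hNdet]
      _ = (ρ / d) • (((1 - ρ) • B + d • 1)⁻¹ * B) := by
          rw [hK', hρd, ← Matrix.mul_smul, smul_add, smul_smul, smul_smul, hμd]
          congr 1
          module
  rw [hN, key]
  exact (posSemidef_inv_mul_of_posSemidef_mul hNpd.isHermitian hNdet hBN).smul (by positivity)

theorem PosSemidef.mul_dotProduct_self_le_dotProduct_mulVec {X : Matrix m m ℝ} {c : ℝ}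
    (h : (X - c • 1).PosSemidef) (v : m → ℝ) : c * (v ⬝ᵥ v) ≤ v ⬝ᵥ X *ᵥ v := by
  have := h.dotProduct_mulVec_nonneg v
  rw [star_trivial, sub_mulVec, smul_mulVec, one_mulVec, dotProduct_sub, dotProduct_smul,
    smul_eq_mul] at this
  linarith

end Matrix

theorem stmt3_general {n p : ℕ} (D : Matrix (Fin n) (Fin p) ℝ) (lam : ℝ)
    (hK : (D * Dᵀ - lam ^ 2 • (1 : Matrix (Fin n) (Fin n) ℝ)).PosSemidef)
    (ρ : ℝ) (hρ : ρ ∈ Set.Ioc (0:ℝ) 1) (v : Fin n → ℝ) :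
    lam ^ 2 / ((1 - ρ) * lam ^ 2 + ρ) * (v ⬝ᵥ v)
      ≤ v ⬝ᵥ (D * ((1 - ρ) • (Dᵀ * D) + ρ • (1 : Matrix (Fin p) (Fin p) ℝ))⁻¹ * Dᵀ).mulVec v := by
  obtain ⟨hρ0, hρ1⟩ := hρ
  have hM : ((1 - ρ) • (Dᵀ * D) + ρ • 1).PosDef := posDef_smul_add_smul_one
    (by simpa using posSemidef_conjTranspose_mul_self D) (sub_nonneg.2 hρ1) hρ0
  have hN : ((1 - ρ) • (D * Dᵀ) + ρ • 1).PosDef := posDef_smul_add_smul_one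
    (by simpa using posSemidef_self_mul_conjTranspose D) (sub_nonneg.2 hρ1) hρ0
  rw [mul_inv_mul_transpose_eq_inv_mul D _ _ ((isUnit_iff_isUnit_det _).mp hM.isUnit)
    ((isUnit_iff_isUnit_det _).mp hN.isUnit)]
  exact PosSemidef.mul_dotProduct_self_le_dotProduct_mulVec
    (posSemidef_inv_mul_sub_smul_one hK (sq_nonneg lam) hρ0 hρ1) v

/-- Lower bound on the quadratic form of the damped Gauss–Newton output-space operator:
if `K = D Dᵀ ⪰ λ² I` and `ρ ∈ (0,1]`, then for every `v`,
`vᵀ D ((1-ρ)DᵀD + ρI)⁻¹ Dᵀ v ≥ (λ²/((1-ρ)λ² + ρ)) ‖v‖²`. -/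
theorem stmt3 {n p : ℕ} (D : Matrix (Fin n) (Fin p) ℝ) (lam : ℝ) (hlam : 0 < lam)
    (hKpd : (D * Dᵀ).PosDef)
    (hK : (D * Dᵀ - lam ^ 2 • (1 : Matrix (Fin n) (Fin n) ℝ)).PosSemidef)
    (ρ : ℝ) (hρ : ρ ∈ Set.Ioc (0:ℝ) 1) (v : Fin n → ℝ) :
    lam ^ 2 / ((1 - ρ) * lam ^ 2 + ρ) * (v ⬝ᵥ v)
      ≤ v ⬝ᵥ (D * ((1 - ρ) • (Dᵀ * D) + ρ • (1 : Matrix (Fin p) (Fin p) ℝ))⁻¹ * Dᵀ).mulVec v :=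
  stmt3_general D lam hK ρ hρ v
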